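/- With the hypotheses of the PIAA propagation theorem—Fermat stationarity ∂Q/∂x|_(x_i,y_i) = 0, the mirror equation (∂h/∂x)·Q = f₁ − x, and Q(x_i,y_i) = Q₀ with S₀ the free-space distance along the ray—one obtains ∂²Q/∂x²|_(x_i,y_i) = (1/S₀)·∂f₁/∂x|_(x_i,y_i). Similarly ∂²Q/∂x∂y|_(x_i,y_i) = (1/S₀)·∂f₁/∂y|_(x_i,y_i) = (1/S₀)·∂f₂/∂x|_(x_i,y_i), and ∂²Q/∂y²|_(x_i,y_i) = (1/S₀)·∂f₂/∂y|_(x_i,y_i). -/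

import Mathlib

noncomputable def pdx (φ : ℝ × ℝ → ℝ) (p : ℝ × ℝ) : ℝ :=
  deriv (fun t => φ (t, p.2)) p.1

noncomputable def pdy (φ : ℝ × ℝ → ℝ) (p : ℝ × ℝ) : ℝ :=
  deriv (fun t => φ (p.1, t)) p.2

/-!
Fix the target point `(a, c)` on the second mirror and write `S`, `Q` for the distance and the
optical path from `(q, h q)` to it. The mirror equation with `Q ≡ Q₀` says that the remapping is
`f = q + Q₀ ∇h`, so its Jacobian is `I + Q₀ D²h`. Differentiating `Q = S + h - c` twice gives
`D²Q = (I + ∇h ∇hᵀ + (h - c) D²h) / S - r rᵀ / S³ + D²h`, where `r` is the projection of the ray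
onto the tangent vectors of the mirror. Fermat stationarity says `r = -S ∇h`, so the rank-one
terms cancel and `D²Q = (I + (S + h - c) D²h) / S = (I + Q₀ D²h) / S₀` along the ray.
-/

open Filter Topology

section Curves

variable {γ : ℝ → ℝ × ℝ} {v : ℝ × ℝ} {t : ℝ}

theorem hasDerivAt_prodMk_left (x y : ℝ) : HasDerivAt (fun t => ((t, y) : ℝ × ℝ)) (1, 0) x :=
  (hasDerivAt_id x).prodMk (hasDerivAt_const x y)

theorem hasDerivAt_prodMk_right (x y : ℝ) : HasDerivAt (fun t => ((x, t) : ℝ × ℝ)) (0, 1) y :=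
  (hasDerivAt_const y x).prodMk (hasDerivAt_id y)

theorem HasDerivAt.fst (hγ : HasDerivAt γ v t) : HasDerivAt (fun t => (γ t).1) v.1 t :=
  (hasFDerivAt_fst (𝕜 := ℝ) (p := γ t)).comp_hasDerivAt t hγ

theorem HasDerivAt.snd (hγ : HasDerivAt γ v t) : HasDerivAt (fun t => (γ t).2) v.2 t :=
  (hasFDerivAt_snd (𝕜 := ℝ) (p := γ t)).comp_hasDerivAt t hγ

theorem DifferentiableAt.hasDerivAt_comp {F : Type*} [NormedAddCommGroup F] [NormedSpace ℝ F]
    {f : ℝ × ℝ → F} (hf : DifferentiableAt ℝ f (γ t)) (hγ : HasDerivAt γ v t) :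
    HasDerivAt (fun t => f (γ t)) (fderiv ℝ f (γ t) v) t :=
  hf.hasFDerivAt.comp_hasDerivAt t hγ

end Curves

section Partials

variable {φ ψ : ℝ × ℝ → ℝ} {p : ℝ × ℝ} {d : ℝ}

theorem pdx_eq_of_hasDerivAt (hφ : HasDerivAt (fun t => φ (t, p.2)) d p.1) : pdx φ p = d :=
  hφ.deriv

theorem pdy_eq_of_hasDerivAt (hφ : HasDerivAt (fun t => φ (p.1, t)) d p.2) : pdy φ p = d :=
  hφ.deriv

theorem pdx_eq_fderiv (hφ : DifferentiableAt ℝ φ p) : pdx φ p = fderiv ℝ φ p (1, 0) :=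
  pdx_eq_of_hasDerivAt (hφ.hasDerivAt_comp (hasDerivAt_prodMk_left p.1 p.2))

theorem pdy_eq_fderiv (hφ : DifferentiableAt ℝ φ p) : pdy φ p = fderiv ℝ φ p (0, 1) :=
  pdy_eq_of_hasDerivAt (hφ.hasDerivAt_comp (hasDerivAt_prodMk_right p.1 p.2))

theorem pdx_congr (h : φ =ᶠ[𝓝 p] ψ) : pdx φ p = pdx ψ p :=
  (h.comp_tendsto (Continuous.tendsto' (by fun_prop) p.1 p rfl)).deriv_eq

theorem pdy_congr (h : φ =ᶠ[𝓝 p] ψ) : pdy φ p = pdy ψ p :=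
  (h.comp_tendsto (Continuous.tendsto' (by fun_prop) p.2 p rfl)).deriv_eq

end Partials

section OpticalPath

variable (h : ℝ × ℝ → ℝ) (a : ℝ × ℝ) (c : ℝ)

noncomputable def pathLen (q : ℝ × ℝ) : ℝ :=
  √((q.1 - a.1) ^ 2 + (q.2 - a.2) ^ 2 + (h q - c) ^ 2)

noncomputable def opticalPath (q : ℝ × ℝ) : ℝ :=
  pathLen h a c q + h q - c

/-- The inner product of the ray `(q, h q) - (a, c)` with the tangent vector `(v, Dh(q) v)` of the
mirror surface. -/
noncomputable def rayDotTangent (v q : ℝ × ℝ) : ℝ :=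
  (q.1 - a.1) * v.1 + (q.2 - a.2) * v.2 + (h q - c) * fderiv ℝ h q v

noncomputable def opticalPathSlope (v q : ℝ × ℝ) : ℝ :=
  rayDotTangent h a c v q / pathLen h a c q + fderiv ℝ h q v

/-- The `u`-component of the remapping `q ↦ q + Q₀ ∇h(q)` which the mirror equation forces. -/
noncomputable def remapComponent (Q₀ : ℝ) (u q : ℝ × ℝ) : ℝ :=
  q.1 * u.1 + q.2 * u.2 + Q₀ * fderiv ℝ h q u

variable {h a c} {γ : ℝ → ℝ × ℝ} {u v : ℝ × ℝ} {t : ℝ}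

theorem continuous_pathLen (hh : Continuous h) : Continuous (pathLen h a c) := by
  unfold pathLen
  fun_prop

theorem hasDerivAt_fderiv_apply_comp (hh : DifferentiableAt ℝ (fderiv ℝ h) (γ t))
    (hγ : HasDerivAt γ v t) (u : ℝ × ℝ) :
    HasDerivAt (fun t => fderiv ℝ h (γ t) u) (fderiv ℝ (fderiv ℝ h) (γ t) v u) t := by
  simpa using (hh.hasDerivAt_comp hγ).clm_apply (hasDerivAt_const t u)

theorem hasDerivAt_pathLen_comp (hh : DifferentiableAt ℝ h (γ t)) (hγ : HasDerivAt γ v t)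
    (hs : 0 < pathLen h a c (γ t)) :
    HasDerivAt (fun t => pathLen h a c (γ t))
      (rayDotTangent h a c v (γ t) / pathLen h a c (γ t)) t := by
  have hsq : HasDerivAt (fun t => ((γ t).1 - a.1) ^ 2 + ((γ t).2 - a.2) ^ 2 + (h (γ t) - c) ^ 2)
      (2 * rayDotTangent h a c v (γ t)) t := by
    refine ((((hγ.fst.sub_const a.1).fun_pow 2).fun_add
      ((hγ.snd.sub_const a.2).fun_pow 2)).fun_add
      (((hh.hasDerivAt_comp hγ).sub_const c).fun_pow 2)).congr_deriv ?_
    unfold rayDotTangent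
    ring
  refine (hsq.sqrt (Real.sqrt_pos.mp hs).ne').congr_deriv ?_
  unfold pathLen
  field_simp

theorem hasDerivAt_opticalPath_comp (hh : DifferentiableAt ℝ h (γ t)) (hγ : HasDerivAt γ v t)
    (hs : 0 < pathLen h a c (γ t)) :
    HasDerivAt (fun t => opticalPath h a c (γ t)) (opticalPathSlope h a c v (γ t)) t :=
  ((hasDerivAt_pathLen_comp hh hγ hs).add (hh.hasDerivAt_comp hγ)).sub_const c

theorem hasDerivAt_rayDotTangent_comp (hh : DifferentiableAt ℝ h (γ t))
    (hh' : DifferentiableAt ℝ (fderiv ℝ h) (γ t)) (hγ : HasDerivAt γ v t) :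
    HasDerivAt (fun t => rayDotTangent h a c u (γ t))
      (v.1 * u.1 + v.2 * u.2 + fderiv ℝ h (γ t) v * fderiv ℝ h (γ t) u +
        (h (γ t) - c) * fderiv ℝ (fderiv ℝ h) (γ t) v u) t := by
  refine ((((hγ.fst.sub_const a.1).mul_const u.1).fun_add
    ((hγ.snd.sub_const a.2).mul_const u.2)).fun_add
    (((hh.hasDerivAt_comp hγ).sub_const c).fun_mul
      (hasDerivAt_fderiv_apply_comp hh' hγ u))).congr_deriv ?_
  ring

theorem hasDerivAt_opticalPathSlope_comp_of_stationary (hh : DifferentiableAt ℝ h (γ t))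
    (hh' : DifferentiableAt ℝ (fderiv ℝ h) (γ t)) (hγ : HasDerivAt γ v t)
    (hs : 0 < pathLen h a c (γ t)) (hu : opticalPathSlope h a c u (γ t) = 0)
    (hv : opticalPathSlope h a c v (γ t) = 0) :
    HasDerivAt (fun t => opticalPathSlope h a c u (γ t))
      (1 / pathLen h a c (γ t) *
        (v.1 * u.1 + v.2 * u.2 + opticalPath h a c (γ t) * fderiv ℝ (fderiv ℝ h) (γ t) v u)) t := by
  have ray_eq {w : ℝ × ℝ} (hw : opticalPathSlope h a c w (γ t) = 0) :
      rayDotTangent h a c w (γ t) = -fderiv ℝ h (γ t) w * pathLen h a c (γ t) := by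
    rw [opticalPathSlope] at hw
    field_simp at hw
    linarith
  refine (((hasDerivAt_rayDotTangent_comp hh hh' hγ).fun_div (hasDerivAt_pathLen_comp hh hγ hs)
    hs.ne').fun_add (hasDerivAt_fderiv_apply_comp hh' hγ u)).congr_deriv ?_
  rw [ray_eq hu, ray_eq hv, opticalPath]
  field_simp
  ring

theorem hasDerivAt_remapComponent_comp (hh' : DifferentiableAt ℝ (fderiv ℝ h) (γ t))
    (hγ : HasDerivAt γ v t) (Q₀ : ℝ) :
    HasDerivAt (fun t => remapComponent h Q₀ u (γ t))
      (v.1 * u.1 + v.2 * u.2 + Q₀ * fderiv ℝ (fderiv ℝ h) (γ t) v u) t :=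
  ((hγ.fst.mul_const u.1).fun_add (hγ.snd.mul_const u.2)).fun_add
    ((hasDerivAt_fderiv_apply_comp hh' hγ u).const_mul Q₀)

variable {p : ℝ × ℝ}

theorem pdx_opticalPathSlope_of_stationary (hh : DifferentiableAt ℝ h p)
    (hh' : DifferentiableAt ℝ (fderiv ℝ h) p) (hs : 0 < pathLen h a c p)
    (hu : opticalPathSlope h a c u p = 0) (hx : opticalPathSlope h a c (1, 0) p = 0) :
    pdx (opticalPathSlope h a c u) p = 1 / pathLen h a c p *
      ((1, 0).1 * u.1 + (1, 0).2 * u.2 + opticalPath h a c p * fderiv ℝ (fderiv ℝ h) p (1, 0) u) :=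
  pdx_eq_of_hasDerivAt <| hasDerivAt_opticalPathSlope_comp_of_stationary hh hh'
    (hasDerivAt_prodMk_left p.1 p.2) hs hu hx

theorem pdy_opticalPathSlope_of_stationary (hh : DifferentiableAt ℝ h p)
    (hh' : DifferentiableAt ℝ (fderiv ℝ h) p) (hs : 0 < pathLen h a c p)
    (hu : opticalPathSlope h a c u p = 0) (hy : opticalPathSlope h a c (0, 1) p = 0) :
    pdy (opticalPathSlope h a c u) p = 1 / pathLen h a c p *
      ((0, 1).1 * u.1 + (0, 1).2 * u.2 + opticalPath h a c p * fderiv ℝ (fderiv ℝ h) p (0, 1) u) :=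
  pdy_eq_of_hasDerivAt <| hasDerivAt_opticalPathSlope_comp_of_stationary hh hh'
    (hasDerivAt_prodMk_right p.1 p.2) hs hu hy

theorem pdx_remapComponent (hh' : DifferentiableAt ℝ (fderiv ℝ h) p) (Q₀ : ℝ) :
    pdx (remapComponent h Q₀ u) p =
      (1, 0).1 * u.1 + (1, 0).2 * u.2 + Q₀ * fderiv ℝ (fderiv ℝ h) p (1, 0) u :=
  pdx_eq_of_hasDerivAt <|
    hasDerivAt_remapComponent_comp hh' (hasDerivAt_prodMk_left p.1 p.2) Q₀

theorem pdy_remapComponent (hh' : DifferentiableAt ℝ (fderiv ℝ h) p) (Q₀ : ℝ) :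
    pdy (remapComponent h Q₀ u) p =
      (0, 1).1 * u.1 + (0, 1).2 * u.2 + Q₀ * fderiv ℝ (fderiv ℝ h) p (0, 1) u :=
  pdy_eq_of_hasDerivAt <|
    hasDerivAt_remapComponent_comp hh' (hasDerivAt_prodMk_right p.1 p.2) Q₀

theorem eq_remapComponent_of_pdx_mul {f : ℝ × ℝ → ℝ} {Q₀ : ℝ} (hh : Differentiable ℝ h)
    (hf : ∀ p, pdx h p * Q₀ = f p - p.1) : f = remapComponent h Q₀ (1, 0) :=
  funext fun p => by
    rw [remapComponent, ← pdx_eq_fderiv (hh p)]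
    linarith [hf p]

theorem eq_remapComponent_of_pdy_mul {f : ℝ × ℝ → ℝ} {Q₀ : ℝ} (hh : Differentiable ℝ h)
    (hf : ∀ p, pdy h p * Q₀ = f p - p.2) : f = remapComponent h Q₀ (0, 1) :=
  funext fun p => by
    rw [remapComponent, ← pdy_eq_fderiv (hh p)]
    linarith [hf p]

theorem eventually_pathLen_pos (hh : Continuous h) (hp : 0 < pathLen h a c p) :
    ∀ᶠ q in 𝓝 p, 0 < pathLen h a c q :=
  continuousAt_const.eventually_lt (continuous_pathLen hh).continuousAt hp

theorem pdx_opticalPath_eventuallyEq (hh : Differentiable ℝ h) (hp : 0 < pathLen h a c p) :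
    pdx (opticalPath h a c) =ᶠ[𝓝 p] opticalPathSlope h a c (1, 0) := by
  filter_upwards [eventually_pathLen_pos hh.continuous hp] with q hq
  exact pdx_eq_of_hasDerivAt <|
    hasDerivAt_opticalPath_comp (hh _) (hasDerivAt_prodMk_left q.1 q.2) hq

theorem pdy_opticalPath_eventuallyEq (hh : Differentiable ℝ h) (hp : 0 < pathLen h a c p) :
    pdy (opticalPath h a c) =ᶠ[𝓝 p] opticalPathSlope h a c (0, 1) := by
  filter_upwards [eventually_pathLen_pos hh.continuous hp] with q hq
  exact pdy_eq_of_hasDerivAt <|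
    hasDerivAt_opticalPath_comp (hh _) (hasDerivAt_prodMk_right q.1 q.2) hq

end OpticalPath

theorem stmt_8_general (h ht f₁ f₂ : ℝ × ℝ → ℝ)
    (hh : ContDiff ℝ 2 h)
    (S Q : ℝ × ℝ → ℝ × ℝ → ℝ)
    (hS : ∀ p q : ℝ × ℝ, S p q =
      Real.sqrt ((p.1 - q.1)^2 + (p.2 - q.2)^2 + (h p - ht q)^2))
    (hQ : ∀ p q : ℝ × ℝ, Q p q = S p q + h p - ht q)
    (Q₀ : ℝ)
    (hmirror1 : ∀ p : ℝ × ℝ, pdx h p * Q p (f₁ p, f₂ p) = f₁ p - p.1)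
    (hmirror2 : ∀ p : ℝ × ℝ, pdy h p * Q p (f₁ p, f₂ p) = f₂ p - p.2)
    (hconst : ∀ p : ℝ × ℝ, Q p (f₁ p, f₂ p) = Q₀)
    (xt yt : ℝ) (pᵢ : ℝ × ℝ)
    (hray : f₁ pᵢ = xt ∧ f₂ pᵢ = yt)
    (hstatx : pdx (fun p => Q p (xt, yt)) pᵢ = 0)
    (hstaty : pdy (fun p => Q p (xt, yt)) pᵢ = 0)
    (S₀ : ℝ) (hS₀ : S₀ = S pᵢ (xt, yt)) (hS₀pos : 0 < S₀) :
    pdx (pdx (fun p => Q p (xt, yt))) pᵢ = (1 / S₀) * pdx f₁ pᵢ ∧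
    pdy (pdx (fun p => Q p (xt, yt))) pᵢ = (1 / S₀) * pdy f₁ pᵢ ∧
    pdy (pdx (fun p => Q p (xt, yt))) pᵢ = (1 / S₀) * pdx f₂ pᵢ ∧
    pdy (pdy (fun p => Q p (xt, yt))) pᵢ = (1 / S₀) * pdy f₂ pᵢ := by
  have hd : Differentiable ℝ h := hh.differentiable two_ne_zero
  have hd2 : Differentiable ℝ (fderiv ℝ h) := (hh.fderiv_right le_rfl).differentiable one_ne_zero
  have hsymm : IsSymmSndFDerivAt ℝ h pᵢ := hh.contDiffAt.isSymmSndFDerivAt (by simp)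
  set c := ht (xt, yt)
  have hF : (fun p => Q p (xt, yt)) = opticalPath h (xt, yt) c :=
    funext fun p => by rw [hQ, hS]; rfl
  have hS₀' : pathLen h (xt, yt) c pᵢ = S₀ := by rw [hS₀, hS]; rfl
  have hQ₀ : opticalPath h (xt, yt) c pᵢ = Q₀ := by
    rw [← hconst, hray.1, hray.2, ← congrFun hF]
  have hf₁ := eq_remapComponent_of_pdx_mul hd fun p => hconst p ▸ hmirror1 p
  have hf₂ := eq_remapComponent_of_pdy_mul hd fun p => hconst p ▸ hmirror2 p
  have hs : 0 < pathLen h (xt, yt) c pᵢ := hS₀' ▸ hS₀pos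
  have hFx := pdx_opticalPath_eventuallyEq hd hs
  have hFy := pdy_opticalPath_eventuallyEq hd hs
  have hx0 : opticalPathSlope h (xt, yt) c (1, 0) pᵢ = 0 := by
    rw [← hFx.eq_of_nhds, ← hF]; exact hstatx
  have hy0 : opticalPathSlope h (xt, yt) c (0, 1) pᵢ = 0 := by
    rw [← hFy.eq_of_nhds, ← hF]; exact hstaty
  rw [hF, pdx_congr hFx, pdy_congr hFx, pdy_congr hFy, hf₁, hf₂]
  refine ⟨?_, ?_, ?_, ?_⟩
  · rw [pdx_opticalPathSlope_of_stationary (hd _) (hd2 _) hs hx0 hx0,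
      pdx_remapComponent (hd2 _), hQ₀, hS₀']
  · rw [pdy_opticalPathSlope_of_stationary (hd _) (hd2 _) hs hx0 hy0,
      pdy_remapComponent (hd2 _), hQ₀, hS₀']
  · rw [pdy_opticalPathSlope_of_stationary (hd _) (hd2 _) hs hx0 hy0,
      pdx_remapComponent (hd2 _), hQ₀, hS₀', hsymm]
    ring
  · rw [pdy_opticalPathSlope_of_stationary (hd _) (hd2 _) hs hy0 hy0,
      pdy_remapComponent (hd2 _), hQ₀, hS₀']

theorem stmt_8 (h ht f₁ f₂ : ℝ × ℝ → ℝ)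
    (hh : ContDiff ℝ 2 h) (hht : ContDiff ℝ 2 ht)
    (hf₁ : ContDiff ℝ 1 f₁) (hf₂ : ContDiff ℝ 1 f₂)
    (S Q : ℝ × ℝ → ℝ × ℝ → ℝ)
    (hS : ∀ p q : ℝ × ℝ, S p q =
      Real.sqrt ((p.1 - q.1)^2 + (p.2 - q.2)^2 + (h p - ht q)^2))
    (hQ : ∀ p q : ℝ × ℝ, Q p q = S p q + h p - ht q)
    (Q₀ : ℝ)
    (hmirror1 : ∀ p : ℝ × ℝ, pdx h p * Q p (f₁ p, f₂ p) = f₁ p - p.1)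
    (hmirror2 : ∀ p : ℝ × ℝ, pdy h p * Q p (f₁ p, f₂ p) = f₂ p - p.2)
    (hconst : ∀ p : ℝ × ℝ, Q p (f₁ p, f₂ p) = Q₀)
    (xt yt : ℝ) (pᵢ : ℝ × ℝ)
    (hray : f₁ pᵢ = xt ∧ f₂ pᵢ = yt)
    (hstatx : pdx (fun p => Q p (xt, yt)) pᵢ = 0)
    (hstaty : pdy (fun p => Q p (xt, yt)) pᵢ = 0)
    (S₀ : ℝ) (hS₀ : S₀ = S pᵢ (xt, yt)) (hS₀pos : 0 < S₀) :
    pdx (pdx (fun p => Q p (xt, yt))) pᵢ = (1 / S₀) * pdx f₁ pᵢ ∧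
    pdy (pdx (fun p => Q p (xt, yt))) pᵢ = (1 / S₀) * pdy f₁ pᵢ ∧
    pdy (pdx (fun p => Q p (xt, yt))) pᵢ = (1 / S₀) * pdx f₂ pᵢ ∧
    pdy (pdy (fun p => Q p (xt, yt))) pᵢ = (1 / S₀) * pdy f₂ pᵢ :=
  stmt_8_general h ht f₁ f₂ hh S Q hS hQ Q₀ hmirror1 hmirror2 hconst xt yt pᵢ hray hstatx hstaty S₀
    hS₀ hS₀pos
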